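/- Let L be a lattice, F(L) the set of all filters of L, f(a) = {X ∈ F(L) : a ∈ X}, and define A ∨** B = {Z ∈ F(L) : ∃ X ∈ A, ∃ Y ∈ B, X ∩ Y ⊆ Z}. Then f(a) ∨** f(b) = f(a ∨ b). -/
import Mathlib

def IsLatFilter {L : Type*} [Lattice L] (X : Set L) : Prop :=
  X.Nonempty ∧ (∀ a b : L, a ∈ X → a ≤ b → b ∈ X) ∧ (∀ a b : L, a ∈ X → b ∈ X → a ⊓ b ∈ X)

def fLat {L : Type*} [Lattice L] (a : L) : Set (Set L) := {X | IsLatFilter X ∧ a ∈ X}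

def joinStarStar {L : Type*} [Lattice L] (A B : Set (Set L)) : Set (Set L) :=
  {Z | IsLatFilter Z ∧ ∃ X ∈ A, ∃ Y ∈ B, X ∩ Y ⊆ Z}

lemma isLatFilter_principal {L : Type*} [Lattice L] (a : L) :
    IsLatFilter {x : L | a ≤ x} :=
  ⟨⟨a, le_refl a⟩, fun x y hx hxy => le_trans hx hxy,
   fun x y hx hy => le_inf hx hy⟩

theorem joinStarStar_f_eq_f_sup {L : Type*} [Lattice L] (a b : L) :
    joinStarStar (fLat a) (fLat b) = fLat (a ⊔ b) := by
  ext Z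
  constructor
  · rintro ⟨hZ, X, ⟨hX, haX⟩, Y, ⟨hY, hbY⟩, hsub⟩
    refine ⟨hZ, hsub ⟨hX.2.1 a _ haX le_sup_left, hY.2.1 b _ hbY le_sup_right⟩⟩
  · rintro ⟨hZ, hab⟩
    refine ⟨hZ, {x | a ≤ x}, ⟨isLatFilter_principal a, le_refl a⟩,
      {x | b ≤ x}, ⟨isLatFilter_principal b, le_refl b⟩, ?_⟩
    rintro x ⟨hax, hbx⟩
    exact hZ.2.1 _ _ hab (sup_le hax hbx)
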